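/- arXiv:1608.06996 — 4 statements merged into one kernel-verified Lean document; each statement's English description precedes it below -/
import Mathlib

section
/- Let M ⊆ ℕ₀^d be a misère-play vector subtraction game with 0 ∉ M. Then the set of minimal elements of M equals the set of minimal elements of P(M), the set of P-positions of M. -/
/-- `x` is a terminal position of the subtraction game with move set `M`:
no move `m ∈ M` satisfies `m ≤ x`. -/
def Terminal {α : Type*} [PartialOrder α] [Sub α] (M : Set α) (x : α) : Prop :=
  ∀ m ∈ M, ¬ m ≤ x

/-- The set of terminal positions `T_M`. -/
def Tset {α : Type*} [PartialOrder α] [Sub α] (M : Set α) : Set α :=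
  {x | Terminal M x}

/-- Misère-play P-positions of a vector subtraction game, by well-founded recursion:
`x` is a P-position iff it has at least one option, and every option `x - m` is an
N-position, i.e. is terminal or has an option `x - m - m'` that is a P-position.
(The guard `x - m - m' < x` is automatic when `0 ∉ M`; when `0 ∈ M` the game is drawn
everywhere and this definition correctly yields no P-positions.) -/
def IsP {α : Type*} [PartialOrder α] [Sub α] [WellFoundedLT α] (M : Set α) : α → Prop :=
  (wellFounded_lt (α := α)).fix fun x rec =>
    (∃ m ∈ M, m ≤ x) ∧ ∀ m ∈ M, m ≤ x →
      (Terminal M (x - m) ∨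
        ∃ m' ∈ M, m' ≤ x - m ∧ ∃ h : x - m - m' < x, rec (x - m - m') h)

/-- The set of misère P-positions (this is also the `★`-operator `M ↦ M★`). -/
def Pset {α : Type*} [PartialOrder α] [Sub α] [WellFoundedLT α] (M : Set α) : Set α :=
  {x | IsP M x}

/-- `x` is a misère N-position: terminal, or has an option that is a P-position. -/
def IsN {α : Type*} [PartialOrder α] [Sub α] [WellFoundedLT α] (M : Set α) (x : α) : Prop :=
  Terminal M x ∨ ∃ m ∈ M, m ≤ x ∧ IsP M (x - m)

/-- The set of misère N-positions. -/
def Nset {α : Type*} [PartialOrder α] [Sub α] [WellFoundedLT α] (M : Set α) : Set α :=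
  {x | IsN M x}

/-- The set of minimal elements of `M`. -/
def minSet {α : Type*} [PartialOrder α] (M : Set α) : Set α :=
  {m ∈ M | ∀ m' ∈ M, m' ≤ m → m' = m}

/-- Pointwise convergence of the iterates of the `★`-operator to the set `L`. -/
def LimitsTo {α : Type*} [PartialOrder α] [Sub α] [WellFoundedLT α] (M L : Set α) : Prop :=
  ∀ x : α, ∃ N : ℕ, ∀ i ≥ N, (x ∈ Pset^[i] M ↔ x ∈ L)

/-- The one-dimensional reflexive games `M_k` (with `M_0 = ∅`). -/
def Mk (k : ℕ) : Set ℕ :=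
  {n | 1 ≤ k ∧ ∃ i j : ℕ, k ≤ j ∧ j ≤ 2 * k - 1 ∧ n = i * (3 * k - 1) + j}


lemma isP_iff {α : Type*} [PartialOrder α] [Sub α] [WellFoundedLT α] (M : Set α) (x : α) :
    IsP M x ↔ (∃ m ∈ M, m ≤ x) ∧ ∀ m ∈ M, m ≤ x →
      (Terminal M (x - m) ∨
        ∃ m' ∈ M, m' ≤ x - m ∧ ∃ _ : x - m - m' < x, IsP M (x - m - m')) := by
  unfold IsP
  rw [WellFounded.fix_eq]

lemma minSet_mem_Pset {d : ℕ} {M : Set (Fin d → ℕ)}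
    (h0 : (0 : Fin d → ℕ) ∉ M) {m : Fin d → ℕ} (hm : m ∈ minSet M) : IsP M m := by
  obtain ⟨hmM, hmin⟩ := hm
  rw [isP_iff]
  refine ⟨⟨m, hmM, le_refl m⟩, ?_⟩
  intro m' hm' hle
  left
  rw [hmin m' hm' hle]
  have hz : m - m = (0 : Fin d → ℕ) := by
    funext i; exact Nat.sub_self _
  rw [hz]
  intro m'' hm'' hle''
  have : m'' = 0 := le_antisymm hle'' (by intro i; exact Nat.zero_le _)
  exact h0 (this ▸ hm'')

theorem minSet_eq_minSet_Pset {d : ℕ} (M : Set (Fin d → ℕ))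
    (h0 : (0 : Fin d → ℕ) ∉ M) : minSet M = minSet (Pset M) := by
  ext x
  constructor
  · rintro ⟨hxM, hxmin⟩
    refine ⟨minSet_mem_Pset h0 ⟨hxM, hxmin⟩, ?_⟩
    intro y hy hyx
    have hy' : IsP M y := hy
    obtain ⟨⟨m, hmM, hmy⟩, -⟩ := (isP_iff M y).mp hy'
    have hmx : m = x := hxmin m hmM (hmy.trans hyx)
    exact le_antisymm hyx (hmx ▸ hmy)
  · rintro ⟨hxP, hxmin⟩
    obtain ⟨⟨m, hmM, hmx⟩, -⟩ := (isP_iff M x).mp hxP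
    -- find a minimal element of M below m
    have hne : {m' | m' ∈ M ∧ m' ≤ m}.Nonempty := ⟨m, hmM, le_refl m⟩
    obtain ⟨m₀, ⟨hm₀M, hm₀m⟩, hmin⟩ :=
      (wellFounded_lt (α := Fin d → ℕ)).has_min _ hne
    have hm₀min : m₀ ∈ minSet M := by
      refine ⟨hm₀M, fun m' hm' hle => ?_⟩
      by_contra hne'
      exact hmin m' ⟨hm', hle.trans hm₀m⟩ (lt_of_le_of_ne hle hne')
    have hm₀P : IsP M m₀ := minSet_mem_Pset h0 hm₀min
    have : m₀ = x := hxmin m₀ hm₀P (hm₀m.trans hmx)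
    exact this ▸ hm₀min
end

section
/- A move set A ⊆ ℕ₀^d is reflexive for the misère-play convention (i.e., P(A) = A) if and only if A + A = A^c \ T_A, where A + A = {a + b : a, b ∈ A}, A^c is the complement of A in ℕ₀^d, and T_A is the set of terminal positions of the game A. -/
/-!
The P-positions solve `x ∈ S ↔ x ∉ T_M ∧ x - m ∉ S` for every option `x - m` of `x`, and by
well-founded induction they are its only solution provided `0 ∉ M` (if `0 ∈ M`, nothing solves
it at `x = 0`, and P is empty). So `A` is reflexive iff `A` solves its own equation, which reads
`x ∈ A ↔ x ∉ T_A ∧ x ∉ A + A`; as elements of `A` and of `A + A` are never terminal, this is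
equivalent to `A + A = Aᶜ \ T_A`.
-/

open Pointwise

def IsMisereKernel {α : Type*} [PartialOrder α] [Sub α] (M S : Set α) : Prop :=
  ∀ x, x ∈ S ↔ x ∉ Tset M ∧ ∀ m ∈ M, m ≤ x → x - m ∉ S

section Positions

variable {α : Type*} [PartialOrder α] [Sub α]

theorem notMem_Tset_iff {M : Set α} {x : α} : x ∉ Tset M ↔ ∃ m ∈ M, m ≤ x := by
  simp [Tset, Terminal]

theorem mem_Pset_iff [WellFoundedLT α] {M : Set α} {x : α} :
    x ∈ Pset M ↔ x ∉ Tset M ∧ ∀ m ∈ M, m ≤ x →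
      (x - m ∈ Tset M ∨ ∃ m' ∈ M, m' ≤ x - m ∧ ∃ _ : x - m - m' < x, x - m - m' ∈ Pset M) := by
  rw [notMem_Tset_iff]
  change IsP M x ↔ _
  rw [IsP, WellFounded.fix_eq]
  rfl

end Positions

section SubtractionGame

variable {α : Type*} [AddCommMonoid α] [PartialOrder α] [CanonicallyOrderedAdd α] [Sub α]
  {M S : Set α}

theorem Pset_eq_empty_of_zero_mem [WellFoundedLT α] (h0 : 0 ∈ M) : Pset M = ∅ := by
  refine Set.eq_empty_of_forall_notMem fun x => ?_
  induction x using WellFoundedLT.induction with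
  | _ x ih =>
  intro hx
  rcases (mem_Pset_iff.1 hx).2 0 h0 zero_le with hT | ⟨_, _, _, hlt, hP⟩
  · exact hT 0 h0 zero_le
  · exact ih _ hlt hP

variable [OrderedSub α]

theorem IsMisereKernel.zero_notMem (hS : IsMisereKernel M S) : (0 : α) ∉ M := by
  intro h0
  have hT : (0 : α) ∉ Tset M := notMem_Tset_iff.2 ⟨0, h0, le_rfl⟩
  have hopt : (∀ m ∈ M, m ≤ 0 → 0 - m ∉ S) ↔ (0 : α) ∉ S :=
    ⟨fun h => by simpa using h 0 h0 le_rfl,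
      fun h m _ hm => by rwa [nonpos_iff_eq_zero.1 hm, tsub_zero]⟩
  have h := hS 0
  rw [hopt, and_iff_right hT] at h
  exact iff_not_self h

variable [IsOrderedCancelAddMonoid α]

theorem Set.mem_add_iff_exists_le_tsub_mem {A B : Set α} {x : α} :
    x ∈ A + B ↔ ∃ a ∈ A, a ≤ x ∧ x - a ∈ B := by
  constructor
  · rintro ⟨a, ha, b, hb, rfl⟩
    exact ⟨a, ha, le_self_add, by rwa [add_tsub_cancel_left]⟩
  · rintro ⟨a, ha, hax, hxa⟩
    exact ⟨a, ha, x - a, hxa, add_tsub_cancel_of_le hax⟩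

theorem tsub_lt_self_of_le_of_ne_zero {x m : α} (hmx : m ≤ x) (hm : m ≠ 0) : x - m < x :=
  by simpa using tsub_lt_tsub_left_of_le hmx (pos_iff_ne_zero.2 hm)

theorem isMisereKernel_self_iff {A : Set α} :
    IsMisereKernel A A ↔ A + A = Aᶜ \ Tset A := by
  have hsum : ∀ x, (∀ a ∈ A, a ≤ x → x - a ∉ A) ↔ x ∉ A + A := by
    simp [Set.mem_add_iff_exists_le_tsub_mem]
  simp only [IsMisereKernel, hsum, Set.ext_iff, Set.mem_sdiff, Set.mem_compl_iff]
  refine forall_congr' fun x => ?_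
  have hA : x ∈ A → x ∉ Tset A := fun hx => notMem_Tset_iff.2 ⟨x, hx, le_rfl⟩
  have hAA : x ∈ A + A → x ∉ Tset A := fun hx =>
    let ⟨a, ha, hax, _⟩ := Set.mem_add_iff_exists_le_tsub_mem.1 hx
    notMem_Tset_iff.2 ⟨a, ha, hax⟩
  tauto

variable [WellFoundedLT α]

theorem isMisereKernel_Pset (h0 : 0 ∉ M) : IsMisereKernel M (Pset M) := by
  intro x
  induction x using WellFoundedLT.induction with
  | _ x ih =>
  rw [mem_Pset_iff]
  refine and_congr_right fun _ => forall₂_congr fun m hm => imp_congr_right fun hmx => ?_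
  have hlt : x - m < x := tsub_lt_self_of_le_of_ne_zero hmx (ne_of_mem_of_not_mem hm h0)
  have hguard : ∀ m', x - m - m' < x := fun _ => tsub_le_self.trans_lt hlt
  rw [ih _ hlt]
  simp only [hguard, exists_prop_of_true]
  push Not
  exact or_iff_not_imp_left

theorem IsMisereKernel.eq_Pset (hS : IsMisereKernel M S) : S = Pset M := by
  have h0 := hS.zero_notMem
  ext x
  induction x using WellFoundedLT.induction with
  | _ x ih =>
  rw [hS x, isMisereKernel_Pset h0 x]
  exact and_congr_right fun _ => forall₂_congr fun m hm => imp_congr_right fun hmx =>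
    not_congr (ih _ (tsub_lt_self_of_le_of_ne_zero hmx (ne_of_mem_of_not_mem hm h0)))

end SubtractionGame

open Pointwise in
theorem reflexive_iff_sumset {d : ℕ} (A : Set (Fin d → ℕ)) :
    Pset A = A ↔ A + A = Aᶜ \ Tset A := by
  rw [← isMisereKernel_self_iff]
  constructor
  · intro hP
    have h0 : (0 : Fin d → ℕ) ∉ A := fun h0 => by
      have hA : A = ∅ := hP.symm.trans (Pset_eq_empty_of_zero_mem h0)
      simp [hA] at h0
    simpa only [hP] using isMisereKernel_Pset h0
  · exact fun hA => hA.eq_Pset.symm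
end

section
/- Let M ⊆ ℕ₀ be a one-dimensional misère subtraction game. M is reflexive (P(M) = M) if and only if M = M_k for some k ∈ ℕ₀, where M_0 = ∅ and for k ≥ 1, M_k = {i(3k−1) + j : i ∈ ℕ₀, k ≤ j ≤ 2k−1}. -/
section Aux
variable {M : Set ℕ}

theorem isP_def (M : Set ℕ) (x : ℕ) :
    IsP M x ↔ (∃ m ∈ M, m ≤ x) ∧ ∀ m ∈ M, m ≤ x →
      (Terminal M (x - m) ∨
        ∃ m' ∈ M, m' ≤ x - m ∧ ∃ _h : x - m - m' < x, IsP M (x - m - m')) := by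
  rw [IsP, WellFounded.fix_eq]

theorem isP_unfold (h0 : 0 ∉ M) (x : ℕ) :
    IsP M x ↔ (∃ m ∈ M, m ≤ x) ∧ ∀ m ∈ M, m ≤ x → IsN M (x - m) := by
  rw [isP_def]
  refine and_congr_right fun _ => forall_congr' fun m => forall_congr' fun hm =>
    forall_congr' fun hmx => or_congr_right ?_
  have hm0 : m ≠ 0 := fun h => h0 (h ▸ hm)
  constructor
  · rintro ⟨m', hm', h1, _, h3⟩; exact ⟨m', hm', h1, h3⟩
  · rintro ⟨m', hm', h1, h3⟩; exact ⟨m', hm', h1, by omega, h3⟩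

theorem isN_iff_not_isP (h0 : 0 ∉ M) : ∀ x, IsN M x ↔ ¬ IsP M x := by
  intro x
  induction x using Nat.strong_induction_on with
  | _ x IH =>
    rw [isP_unfold h0 x]
    constructor
    · rintro (hterm | ⟨m, hm, hmx, hP⟩) ⟨⟨m0, hm0, hm0x⟩, hall⟩
      · exact hterm m0 hm0 hm0x
      · have hlt : x - m < x := by
          have : m ≠ 0 := fun h => h0 (h ▸ hm); omega
        exact (IH (x - m) hlt).mp (hall m hm hmx) hP
    · intro hnot
      by_cases hterm : Terminal M x
      · exact Or.inl hterm
      · unfold Terminal at hterm; push_neg at hterm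
        have hB : ¬ ∀ m ∈ M, m ≤ x → IsN M (x - m) := fun hB => hnot ⟨hterm, hB⟩
        push_neg at hB
        obtain ⟨m, hm, hmx, hN⟩ := hB
        have hlt : x - m < x := by
          have : m ≠ 0 := fun h => h0 (h ▸ hm); omega
        rw [IH (x - m) hlt] at hN
        exact Or.inr ⟨m, hm, hmx, not_not.mp hN⟩

theorem isP_iff_s10 (h0 : 0 ∉ M) (x : ℕ) :
    IsP M x ↔ (∃ m ∈ M, m ≤ x) ∧ ∀ m ∈ M, m ≤ x → ¬ IsP M (x - m) := by
  rw [isP_unfold h0]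
  exact and_congr_right fun _ => forall_congr' fun m => forall_congr' fun hm =>
    forall_congr' fun hmx => isN_iff_not_isP h0 (x - m)

theorem pset_eq_iff (h0 : 0 ∉ M) :
    Pset M = M ↔ ∀ x, (x ∈ M ↔ (∃ m ∈ M, m ≤ x) ∧ ∀ m ∈ M, m ≤ x → x - m ∉ M) := by
  constructor
  · intro h x
    have hPM : ∀ y, IsP M y ↔ y ∈ M := fun y => by
      constructor
      · intro hy; rw [← h]; exact hy
      · intro hy; rw [← h] at hy; exact hy
    rw [← hPM x, isP_iff_s10 h0]
    exact and_congr_right fun _ => forall_congr' fun m => forall_congr' fun hm =>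
      forall_congr' fun hmx => not_congr (hPM (x - m))
  · intro hC
    have key : ∀ x, IsP M x ↔ x ∈ M := by
      intro x
      induction x using Nat.strong_induction_on with
      | _ x IH =>
        rw [isP_iff_s10 h0, hC x]
        refine and_congr_right fun _ => forall_congr' fun m => forall_congr' fun hm =>
          forall_congr' fun hmx => not_congr (IH (x - m) ?_)
        have : m ≠ 0 := fun h => h0 (h ▸ hm); omega
    ext x; exact key x

theorem not_isP_zero (h0 : (0:ℕ) ∈ M) : ¬ IsP M 0 := by
  rw [isP_def]
  rintro ⟨-, hall⟩
  rcases hall 0 h0 le_rfl with hterm | ⟨m', _, _, h, _⟩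
  · exact hterm 0 h0 (by norm_num)
  · omega

theorem mem_Mk_iff {k : ℕ} (hk : 1 ≤ k) (n : ℕ) :
    n ∈ Mk k ↔ k ≤ n % (3 * k - 1) ∧ n % (3 * k - 1) ≤ 2 * k - 1 := by
  have hd : 0 < 3 * k - 1 := by omega
  constructor
  · rintro ⟨-, i, j, hj1, hj2, rfl⟩
    have : (i * (3 * k - 1) + j) % (3 * k - 1) = j := by
      rw [Nat.add_comm, Nat.add_mul_mod_self_right, Nat.mod_eq_of_lt (by omega)]
    rw [this]; exact ⟨hj1, hj2⟩
  · rintro ⟨h1, h2⟩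
    refine ⟨hk, n / (3 * k - 1), n % (3 * k - 1), h1, h2, ?_⟩
    rw [Nat.mul_comm]
    exact (Nat.div_add_mod n (3 * k - 1)).symm

theorem sub_mod_char {d x m : ℕ} (hd : 0 < d) (hm : m ≤ x) :
    (m % d ≤ x % d ∧ (x - m) % d = x % d - m % d) ∨
    (x % d < m % d ∧ (x - m) % d = x % d + d - m % d) := by
  have hq := Nat.div_add_mod x d
  have hp := Nat.div_add_mod m d
  have hpq : m / d ≤ x / d := Nat.div_le_div_right hm
  have hr : x % d < d := Nat.mod_lt _ hd
  have hs : m % d < d := Nat.mod_lt _ hd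
  set q := x / d with hqdef
  set p := m / d with hpdef
  set r := x % d with hrdef
  set s := m % d with hsdef
  rcases le_or_gt s r with h | h
  · left
    refine ⟨h, ?_⟩
    have h2 : d * q = d * p + d * (q - p) := by rw [← Nat.mul_add]; congr 1; omega
    have h1 : x - m = d * (q - p) + (r - s) := by omega
    rw [h1, Nat.mul_add_mod, Nat.mod_eq_of_lt (by omega)]
  · right
    refine ⟨h, ?_⟩
    have hpq' : p < q := by
      rcases Nat.lt_or_ge p q with h' | h'
      · exact h'
      · exfalso
        have : p = q := le_antisymm hpq h'
        rw [this] at hp; omega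
    have h2 : d * q = d * p + d * (q - p - 1) + d := by
      have : d * q = d * (p + (q - p - 1) + 1) := by congr 1; omega
      rw [this, Nat.mul_add, Nat.mul_add, Nat.mul_one]
    have h1 : x - m = d * (q - p - 1) + (r + d - s) := by omega
    rw [h1, Nat.mul_add_mod, Nat.mod_eq_of_lt (by omega)]

end Aux

section Main
variable {M : Set ℕ}

theorem zero_notMem_Mk {k : ℕ} (hk : 1 ≤ k) : (0:ℕ) ∉ Mk k := by
  rw [mem_Mk_iff hk]
  have : 0 % (3 * k - 1) = 0 := Nat.zero_mod _
  omega

theorem cond_Mk {k : ℕ} (hk : 1 ≤ k) (x : ℕ) :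
    x ∈ Mk k ↔ (∃ m ∈ Mk k, m ≤ x) ∧ ∀ m ∈ Mk k, m ≤ x → x - m ∉ Mk k := by
  set d := 3 * k - 1 with hd
  have hd0 : 0 < d := by omega
  have hxr : x % d < d := Nat.mod_lt _ hd0
  have hmem : ∀ n, n ∈ Mk k ↔ k ≤ n % d ∧ n % d ≤ 2 * k - 1 := fun n => mem_Mk_iff hk n
  have hge : ∀ m ∈ Mk k, k ≤ m := by
    intro m hm
    rw [hmem] at hm
    have := Nat.mod_le m d
    omega
  constructor
  · intro hx
    rw [hmem] at hx
    constructor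
    · refine ⟨x % d, ?_, Nat.mod_le x d⟩
      rw [hmem, Nat.mod_eq_of_lt hxr]
      exact hx
    · intro m hm hmx
      rw [hmem] at hm ⊢
      rcases sub_mod_char hd0 hmx with ⟨h1, h2⟩ | ⟨h1, h2⟩ <;> omega
  · intro ⟨hA, hB⟩
    rw [hmem]
    by_contra hr
    rcases lt_or_ge x k with hxk | hxk
    · obtain ⟨m, hm, hmx⟩ := hA
      have := hge m hm
      omega
    · rcases lt_or_ge (x % d) k with hrk | hrk
      · -- residue small: use m = x % d + k
        have hxd : d ≤ x := by
          have hq := Nat.div_add_mod x d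
          have hq1 : 1 ≤ x / d := by
            rcases Nat.eq_zero_or_pos (x / d) with h | h
            · rw [h] at hq; omega
            · exact h
          have : d * 1 ≤ d * (x / d) := Nat.mul_le_mul_left d hq1
          omega
        set m := x % d + k with hmdef
        have hmMk : m ∈ Mk k := by
          rw [hmem, Nat.mod_eq_of_lt (by omega)]
          omega
        have hmx : m ≤ x := by omega
        have hms : m % d = m := Nat.mod_eq_of_lt (by omega)
        refine hB m hmMk hmx ?_
        rw [hmem]
        rcases sub_mod_char hd0 hmx with ⟨h1, h2⟩ | ⟨h1, h2⟩ <;> rw [hms] at h1 h2 <;>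
          rw [h2] <;> omega
      · -- residue large: use m = x % d - k
        have hrg : 2 * k - 1 < x % d := by omega
        set m := x % d - k with hmdef
        have hmlt : m < d := by omega
        have hmMk : m ∈ Mk k := by
          rw [hmem, Nat.mod_eq_of_lt hmlt]
          omega
        have hmx : m ≤ x := le_trans (by omega) (Nat.mod_le x d)
        have hms : m % d = m := Nat.mod_eq_of_lt hmlt
        refine hB m hmMk hmx ?_
        rw [hmem]
        rcases sub_mod_char hd0 hmx with ⟨h1, h2⟩ | ⟨h1, h2⟩ <;> rw [hms] at h1 h2 <;>
          rw [h2] <;> omega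

theorem pset_Mk (k : ℕ) : Pset (Mk k) = Mk k := by
  rcases Nat.eq_zero_or_pos k with rfl | hk
  · have hempty : Mk 0 = ∅ := by
      ext n; simp [Mk]
    rw [hempty, (pset_eq_iff (by simp))]
    simp
  · rw [pset_eq_iff (zero_notMem_Mk hk)]
    exact cond_Mk hk

theorem forward_dir (h : Pset M = M) : ∃ k : ℕ, M = Mk k := by
  have h0 : 0 ∉ M := by
    intro h0
    have : IsP M 0 := by
      have h0' : (0:ℕ) ∈ Pset M := by rw [h]; exact h0
      exact h0'
    exact not_isP_zero h0 this
  have hC := (pset_eq_iff h0).mp h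
  rcases M.eq_empty_or_nonempty with rfl | hne
  · refine ⟨0, ?_⟩
    ext n; simp [Mk]
  · set k := sInf M with hkdef
    have hkM : k ∈ M := Nat.sInf_mem hne
    have hk : 1 ≤ k := by
      rcases Nat.eq_zero_or_pos k with h' | h'
      · exact absurd (h' ▸ hkM) h0
      · exact h'
    have hmin : ∀ m ∈ M, k ≤ m := fun m hm => Nat.sInf_le hm
    refine ⟨k, ?_⟩
    set d := 3 * k - 1 with hd
    have hd0 : 0 < d := by omega
    have key : ∀ x, x ∈ M ↔ (k ≤ x % d ∧ x % d ≤ 2 * k - 1) := by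
      intro x
      induction x using Nat.strong_induction_on with
      | _ x IH =>
        have hxr : x % d < d := Nat.mod_lt _ hd0
        rcases lt_or_ge x k with hxk | hxk
        · -- x < k : both sides false
          constructor
          · intro hx; exact absurd (hmin x hx) (by omega)
          · intro ⟨h1, _⟩
            have := Nat.mod_le x d
            omega
        · constructor
          · -- x ∈ M → residue in range
            intro hx
            by_contra hr
            -- from hC: x ∈ M means all m ∈ M, m ≤ x have x - m ∉ M;
            -- we construct m ∈ M with x - m ∈ M, contradiction.
            have hB := ((hC x).mp hx).2
            rcases lt_or_ge (x % d) k with hrk | hrk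
            · -- small residue
              have hxd : d ≤ x := by
                have hq := Nat.div_add_mod x d
                have hq1 : 1 ≤ x / d := by
                  rcases Nat.eq_zero_or_pos (x / d) with h' | h'
                  · rw [h'] at hq; omega
                  · exact h'
                have : d * 1 ≤ d * (x / d) := Nat.mul_le_mul_left d hq1
                omega
              set m := x % d + k with hmdef
              have hmlt : m < d := by omega
              have hms : m % d = m := Nat.mod_eq_of_lt hmlt
              have hmM : m ∈ M := (IH m (by omega)).mpr (by omega)
              have hmx : m ≤ x := by omega
              refine hB m hmM hmx ?_
              refine (IH (x - m) (by omega)).mpr ?_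
              rcases sub_mod_char hd0 hmx with ⟨h1, h2⟩ | ⟨h1, h2⟩ <;> rw [hms] at h1 h2 <;>
                rw [h2] <;> omega
            · -- large residue
              have hrg : 2 * k - 1 < x % d := by omega
              set m := x % d - k with hmdef
              have hmlt : m < d := by omega
              have hms : m % d = m := Nat.mod_eq_of_lt hmlt
              have hmx : m ≤ x := le_trans (by omega) (Nat.mod_le x d)
              have hmltx : m < x := by
                have := Nat.mod_le x d
                omega
              have hmM : m ∈ M := (IH m hmltx).mpr (by omega)
              refine hB m hmM hmx ?_
              refine (IH (x - m) (by omega)).mpr ?_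
              rcases sub_mod_char hd0 hmx with ⟨h1, h2⟩ | ⟨h1, h2⟩ <;> rw [hms] at h1 h2 <;>
                rw [h2] <;> omega
          · -- residue in range → x ∈ M
            intro ⟨h1, h2⟩
            by_contra hx
            have hnand : ¬ ((∃ m ∈ M, m ≤ x) ∧ ∀ m ∈ M, m ≤ x → x - m ∉ M) :=
              fun hh => hx ((hC x).mpr hh)
            have hA : ∃ m ∈ M, m ≤ x := ⟨k, hkM, hxk⟩
            have hB : ¬ ∀ m ∈ M, m ≤ x → x - m ∉ M := fun hB => hnand ⟨hA, hB⟩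
            push_neg at hB
            obtain ⟨m, hmM, hmx, hy⟩ := hB
            have hmne : m ≠ x := by
              rintro rfl
              exact h0 (by simpa using hy)
            have hmlt : m < x := lt_of_le_of_ne hmx hmne
            have hm1 : 1 ≤ m := by
              rcases Nat.eq_zero_or_pos m with h' | h'
              · exact absurd (h' ▸ hmM) h0
              · exact h'
            have hylt : x - m < x := by omega
            have hs := (IH m hmlt).mp hmM
            have ht := (IH (x - m) hylt).mp hy
            -- x = m + (x - m); compute residue
            have hm' := Nat.div_add_mod m d
            have hy' := Nat.div_add_mod (x - m) d
            have hxeq : x = d * (m / d + (x - m) / d) + (m % d + (x - m) % d) := by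
              rw [Nat.mul_add]; omega
            have e1 : x % d = (m % d + (x - m) % d) % d := by
              conv_lhs => rw [hxeq, Nat.mul_add_mod]
            rcases lt_or_ge (m % d + (x - m) % d) d with hlt | hge
            · rw [Nat.mod_eq_of_lt hlt] at e1; omega
            · obtain ⟨u, hu, hud⟩ : ∃ u, m % d + (x - m) % d = d + u ∧ u < d :=
                ⟨m % d + (x - m) % d - d, by omega, by omega⟩
              rw [hu, Nat.add_mod_left, Nat.mod_eq_of_lt hud] at e1
              omega
    ext x
    rw [key x, mem_Mk_iff hk]

end Main

theorem reflexive_iff_eq_Mk (M : Set ℕ) :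
    Pset M = M ↔ ∃ k : ℕ, M = Mk k := by
  constructor
  · exact forward_dir
  · rintro ⟨k, rfl⟩
    exact pset_Mk k
end

section
/- Let k ≥ 2 and M = {k}. Iterating the misère ★-operator, the limit is reached in exactly 5 steps: M^5 = M_k = {i(3k−1) + j : i ∈ ℕ₀, k ≤ j ≤ 2k−1}, while M^4 ≠ M_k; i.e., φ({k}) = 5. -/
namespace PhiFive

lemma isP_unfold (M : Set ℕ) (x : ℕ) : IsP M x ↔ (∃ m ∈ M, m ≤ x) ∧ ∀ m ∈ M, m ≤ x →
      (Terminal M (x - m) ∨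
        ∃ m' ∈ M, m' ≤ x - m ∧ ∃ _h : x - m - m' < x, IsP M (x - m - m')) := by
  rw [IsP, WellFounded.fix_eq]

lemma resid (p a b r s : ℕ) (hr : r < p) (hs : s < p) (h : p*a + r = p*b + s) :
    a = b ∧ r = s := by
  have h1 : a = b := by
    rcases Nat.lt_trichotomy a b with h2 | h2 | h2
    · have h3 : p * (a+1) ≤ p * b := Nat.mul_le_mul_left p h2
      have h4 : p*(a+1) = p*a + p := by ring
      omega
    · exact h2
    · have h3 : p * (b+1) ≤ p * a := Nat.mul_le_mul_left p h2
      have h4 : p*(b+1) = p*b + p := by ring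
      omega
  subst h1; exact ⟨rfl, by omega⟩

lemma decomp (p y : ℕ) (hp : 0 < p) : ∃ q s, s < p ∧ y = p*q + s := by
  refine ⟨y/p, y%p, Nat.mod_lt _ hp, ?_⟩
  have := Nat.div_add_mod y p; omega

lemma master (k : ℕ) (hk : 1 ≤ k) (S T : Set ℕ) (hkS : k ∈ S) (hS : ∀ m ∈ S, k ≤ m)
    (hT : ∀ t ∈ T, k ≤ t)
    (K1 : ∀ t ∈ T, ∀ m ∈ S, m ≤ t → t - m ∉ T)
    (K2 : ∀ y, k ≤ y → y ∉ T → ∃ m ∈ S, m ≤ y ∧ y - m ∈ T) :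
    Pset S = T := by
  ext x
  show IsP S x ↔ x ∈ T
  induction x using Nat.strong_induction_on with
  | _ x ih =>
  rw [isP_unfold]
  constructor
  · rintro ⟨⟨m0, hm0S, hm0x⟩, hall⟩
    have hxk : k ≤ x := le_trans (hS m0 hm0S) hm0x
    by_contra hxT
    obtain ⟨m, hmS, hmx, hmT⟩ := K2 x hxk hxT
    rcases hall m hmS hmx with hterm | ⟨m', hm'S, hm'le, hlt, hP⟩
    · exact hterm k hkS (hT _ hmT)
    · exact K1 _ hmT m' hm'S hm'le ((ih _ hlt).1 hP)
  · intro hxT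
    have hxk : k ≤ x := hT x hxT
    refine ⟨⟨k, hkS, hxk⟩, ?_⟩
    intro m hmS hmx
    by_cases hterm : x - m < k
    · exact Or.inl (fun m' hm'S hle => by have := hS m' hm'S; omega)
    · push_neg at hterm
      obtain ⟨m', hm'S, hm'le, hm'T⟩ := K2 _ hterm (K1 x hxT m hmS hmx)
      have hk1 : 1 ≤ m := le_trans hk (hS m hmS)
      have hlt : x - m - m' < x := by omega
      exact Or.inr ⟨m', hm'S, hm'le, hlt, (ih _ hlt).2 hm'T⟩

def Sa (k : ℕ) : Set ℕ := {x | ∃ a b, b < k ∧ x = 2*k*a + (k+b)}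
def Sb (k : ℕ) : Set ℕ := {x | (k ≤ x ∧ x < 2*k) ∨ ∃ a, x + 1 = 2*k*a + 4*k}
def Sc (k : ℕ) : Set ℕ := {x | (k ≤ x ∧ x < 2*k) ∨ (4*k ≤ x+1 ∧ x+2 ≤ 5*k) ∨
  ∃ a, x + 2 = 2*k*a + 7*k}
def Sd (k : ℕ) : Set ℕ := {x | (k ≤ x ∧ x < 2*k) ∨ (4*k ≤ x+1 ∧ x+2 ≤ 5*k) ∨
  (7*k ≤ x+2 ∧ x+3 ≤ 8*k) ∨ x + 3 = 10*k}
def Se (k : ℕ) : Set ℕ := {x | ∃ a b, b < k ∧ x + a = 3*k*a + (k+b)}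

variable {k : ℕ}

lemma sa_ge (hk : 1 ≤ k) : ∀ x ∈ Sa k, k ≤ x := by
  rintro x ⟨a, b, hb, rfl⟩; omega
lemma sb_ge (hk : 1 ≤ k) : ∀ x ∈ Sb k, k ≤ x := by
  rintro x (⟨h1, h2⟩ | ⟨a, ha⟩) <;> omega
lemma sc_ge (hk : 1 ≤ k) : ∀ x ∈ Sc k, k ≤ x := by
  rintro x (⟨h1, h2⟩ | ⟨h1, h2⟩ | ⟨a, ha⟩) <;> omega
lemma sd_ge (hk : 1 ≤ k) : ∀ x ∈ Sd k, k ≤ x := by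
  rintro x (⟨h1, h2⟩ | ⟨h1, h2⟩ | ⟨h1, h2⟩ | h1) <;> omega
lemma se_ge (hk : 1 ≤ k) : ∀ x ∈ Se k, k ≤ x := by
  rintro x ⟨a, b, hb, hx⟩
  have h1 : 1*a ≤ (3*k)*a := Nat.mul_le_mul_right a (by omega)
  omega

lemma k_mem_sa (hk : 1 ≤ k) : k ∈ Sa k := ⟨0, 0, hk, by ring⟩
lemma k_mem_sb (hk : 1 ≤ k) : k ∈ Sb k := Or.inl ⟨le_refl k, by omega⟩
lemma k_mem_sc (hk : 1 ≤ k) : k ∈ Sc k := Or.inl ⟨le_refl k, by omega⟩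
lemma k_mem_sd (hk : 1 ≤ k) : k ∈ Sd k := Or.inl ⟨le_refl k, by omega⟩

-- PAIR 1 : moves {k}, kernel Sa
lemma K1_1 (hk : 1 ≤ k) : ∀ t ∈ Sa k, ∀ m ∈ ({k} : Set ℕ), m ≤ t → t - m ∉ Sa k := by
  rintro t ⟨a, b, hb, rfl⟩ m hmem hm ⟨a', b', hb', he'⟩
  rw [Set.mem_singleton_iff] at hmem
  have h : 2*k*a + b = 2*k*a' + (k + b') := by omega
  have := resid (2*k) a a' b (k+b') (by omega) (by omega) h
  omega

lemma K2_1 (hk : 1 ≤ k) : ∀ y, k ≤ y → y ∉ Sa k →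
    ∃ m ∈ ({k} : Set ℕ), m ≤ y ∧ y - m ∈ Sa k := by
  intro y hy hyn
  obtain ⟨q, s, hs, rfl⟩ := decomp (2*k) y (by omega)
  have hsk : s < k := by
    by_contra h; push_neg at h
    exact hyn ⟨q, s - k, by omega, by omega⟩
  rcases q with _ | q'
  · simp at hy hsk; omega
  · have e : 2*k*(q'+1) = 2*k*q' + 2*k := by ring
    exact ⟨k, rfl, by omega, ⟨q', s, hsk, by omega⟩⟩

-- PAIR 2 : moves Sa, kernel Sb
lemma K1_2 (hk : 1 ≤ k) : ∀ t ∈ Sb k, ∀ m ∈ Sa k, m ≤ t → t - m ∉ Sb k := by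
  rintro t ht m ⟨a', b', hb', rfl⟩ hm hcon
  rcases ht with ⟨ht1, ht2⟩ | ⟨a, ha⟩
  · have ha0 : a' = 0 := by
      by_contra h
      have h3 : 2*k*1 ≤ 2*k*a' := Nat.mul_le_mul_left (2*k) (by omega)
      omega
    subst ha0
    rcases hcon with ⟨h1, h2⟩ | ⟨c, hc⟩
    · omega
    · simp only [Nat.mul_zero, Nat.zero_add] at *
      have : (0:ℕ) ≤ 2*k*c := Nat.zero_le _
      omega
  · rcases hcon with ⟨h1, h2⟩ | ⟨c, hc⟩
    · have e1 : 2*k*(a+2) = 2*k*a + 4*k := by ring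
      have e2 : 2*k*(a'+1) = 2*k*a' + 2*k := by ring
      have h : 2*k*(a+2) + 0 = 2*k*(a'+1) + (b' + (t - (2*k*a'+(k+b'))) + 1 - k) := by omega
      have := resid (2*k) (a+2) (a'+1) 0 _ (by omega) (by omega) h
      omega
    · have e1 : 2*k*(c+a') = 2*k*c + 2*k*a' := by ring
      have h : 2*k*a + 0 = 2*k*(c+a') + (k + b') := by omega
      have := resid (2*k) a (c+a') 0 (k+b') (by omega) (by omega) h
      omega

lemma K2_2 (hk : 1 ≤ k) : ∀ y, k ≤ y → y ∉ Sb k →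
    ∃ m ∈ Sa k, m ≤ y ∧ y - m ∈ Sb k := by
  intro y hy hyn
  obtain ⟨q, s, hs, rfl⟩ := decomp (2*k) y (by omega)
  rcases q with _ | q'
  · simp only [Nat.mul_zero, Nat.zero_add] at *
    exact absurd (Or.inl ⟨hy, hs⟩) hyn
  · have e : 2*k*(q'+1) = 2*k*q' + 2*k := by ring
    rcases Nat.lt_or_ge s k with hsk | hsk
    · exact ⟨2*k*q' + (k+0), ⟨q', 0, by omega, rfl⟩, by omega,
        Or.inl ⟨by omega, by omega⟩⟩
    · rcases Nat.lt_or_ge s (2*k-1) with hs2 | hs2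
      · exact ⟨2*k*q' + (k+(s+1-k)), ⟨q', s+1-k, by omega, rfl⟩, by omega,
          Or.inl ⟨by omega, by omega⟩⟩
      · exact absurd (Or.inr ⟨q', by omega⟩) hyn

-- PAIR 3 : moves Sb, kernel Sc
lemma K1_3 (hk : 2 ≤ k) : ∀ t ∈ Sc k, ∀ m ∈ Sb k, m ≤ t → t - m ∉ Sc k := by
  rintro t ht m hmS hm hcon
  rcases hmS with ⟨g1, g2⟩ | ⟨a', ha'⟩
  · rcases ht with ⟨h1, h2⟩ | ⟨h1, h2⟩ | ⟨a, ha⟩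
    · rcases hcon with ⟨c1, c2⟩ | ⟨c1, c2⟩ | ⟨c, hc⟩ <;> omega
    · rcases hcon with ⟨c1, c2⟩ | ⟨c1, c2⟩ | ⟨c, hc⟩ <;> omega
    · rcases hcon with ⟨c1, c2⟩ | ⟨c1, c2⟩ | ⟨c, hc⟩
      · omega
      · omega
      · have h : 2*k*a + 0 = 2*k*c + m := by omega
        have := resid (2*k) a c 0 m (by omega) (by omega) h
        omega
  · rcases ht with ⟨h1, h2⟩ | ⟨h1, h2⟩ | ⟨a, ha⟩
    · omega
    · have ha0 : a' = 0 := by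
        by_contra h
        have h3 : 2*k*1 ≤ 2*k*a' := Nat.mul_le_mul_left (2*k) (by omega)
        omega
      subst ha0
      have e0 : 2*k*0 = 0 := by ring
      rcases hcon with ⟨c1, c2⟩ | ⟨c1, c2⟩ | ⟨c, hc⟩ <;> omega
    · rcases hcon with ⟨c1, c2⟩ | ⟨c1, c2⟩ | ⟨c, hc⟩
      · have e1 : 2*k*(a+1) = 2*k*a + 2*k := by ring
        have e2 : 2*k*(a'+1) = 2*k*a' + 2*k := by ring
        rcases Nat.lt_or_ge (t - m + 1) (2*k) with hy | hy
        · have h : 2*k*(a+1) + k = 2*k*a' + (t - m + 1) := by omega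
          have := resid (2*k) (a+1) a' k (t-m+1) (by omega) (by omega) h
          omega
        · have h : 2*k*(a+1) + k = 2*k*(a'+1) + 0 := by omega
          have := resid (2*k) (a+1) (a'+1) k 0 (by omega) (by omega) h
          omega
      · have e1 : 2*k*(a+1) = 2*k*a + 2*k := by ring
        have e2 : 2*k*(a'+2) = 2*k*a' + 4*k := by ring
        have h : 2*k*(a+1) + k = 2*k*(a'+2) + (t - m + 1 - 4*k) := by omega
        have := resid (2*k) (a+1) (a'+2) k (t-m+1-4*k) (by omega) (by omega) h
        omega
      · have e1 : 2*k*(a'+c+1) = 2*k*a' + 2*k*c + 2*k := by ring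
        have h : 2*k*a + 0 = 2*k*(a'+c+1) + (2*k-1) := by omega
        have := resid (2*k) a (a'+c+1) 0 (2*k-1) (by omega) (by omega) h
        omega

lemma K2_3 (hk : 2 ≤ k) : ∀ y, k ≤ y → y ∉ Sc k →
    ∃ m ∈ Sb k, m ≤ y ∧ y - m ∈ Sc k := by
  intro y hy hyn
  rcases Nat.lt_or_ge y (2*k) with h | h
  · exact absurd (Or.inl ⟨hy, h⟩) hyn
  rcases Nat.lt_or_ge y (3*k) with h2 | h2
  · exact ⟨k, Or.inl ⟨le_refl k, by omega⟩, by omega, Or.inl ⟨by omega, by omega⟩⟩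
  rcases Nat.lt_or_ge y (4*k-1) with h3 | h3
  · exact ⟨y - (2*k-1), Or.inl ⟨by omega, by omega⟩, by omega, Or.inl ⟨by omega, by omega⟩⟩
  rcases Nat.lt_or_ge y (5*k-1) with h4 | h4
  · exact absurd (Or.inr (Or.inl ⟨by omega, by omega⟩)) hyn
  rcases Nat.lt_or_ge y (6*k-1) with h5 | h5
  · exact ⟨y - (4*k-1), Or.inl ⟨by omega, by omega⟩, by omega,
      Or.inr (Or.inl ⟨by omega, by omega⟩)⟩
  rcases Nat.lt_or_ge y (7*k-2) with h6 | h6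
  · exact ⟨y - (5*k-2), Or.inl ⟨by omega, by omega⟩, by omega,
      Or.inr (Or.inl ⟨by omega, by omega⟩)⟩
  rcases Nat.lt_or_ge y (7*k-1) with h7 | h7
  · refine absurd (Or.inr (Or.inr ⟨0, ?_⟩)) hyn
    have e0 : 2*k*0 = 0 := by ring
    omega
  obtain ⟨q, s, hs, he⟩ := decomp (2*k) y (by omega)
  have hq : 3 ≤ q := by
    by_contra hq; push_neg at hq
    interval_cases q <;> omega
  obtain ⟨q3, rfl⟩ : ∃ q3, q = q3 + 3 := ⟨q - 3, by omega⟩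
  have e : 2*k*(q3+3) = 2*k*q3 + 6*k := by ring
  have e2 : 2*k*(q3+1) = 2*k*q3 + 2*k := by ring
  rcases Nat.lt_or_ge s k with hsk | hsk
  · by_cases hs2 : s = k - 2
    · exact absurd (Or.inr (Or.inr ⟨q3, by omega⟩)) hyn
    by_cases hs1 : s = k - 1
    · exact ⟨2*k*(q3+1) + 4*k - 1, Or.inr ⟨q3+1, by omega⟩, by omega,
        Or.inl ⟨by omega, by omega⟩⟩
    · have hq3 : 1 ≤ q3 := by
        by_contra hq3; push_neg at hq3
        interval_cases q3
        · have e0 : 2*k*0 = 0 := by ring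
          omega
      obtain ⟨q4, rfl⟩ : ∃ q4, q3 = q4 + 1 := ⟨q3 - 1, by omega⟩
      have e3 : 2*k*(q4+1) = 2*k*q4 + 2*k := by ring
      exact ⟨k + s + 2, Or.inl ⟨by omega, by omega⟩, by omega,
        Or.inr (Or.inr ⟨q4, by omega⟩)⟩
  · rcases Nat.lt_or_ge s (2*k-1) with hs2 | hs2
    · exact ⟨2*k*(q3+1) + 4*k - 1, Or.inr ⟨q3+1, by omega⟩, by omega,
        Or.inl ⟨by omega, by omega⟩⟩
    · exact ⟨2*k*q3 + 4*k - 1, Or.inr ⟨q3, by omega⟩, by omega,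
        Or.inr (Or.inl ⟨by omega, by omega⟩)⟩

-- PAIR 4 : moves Sc, kernel Sd
lemma K1_4 (hk : 2 ≤ k) : ∀ t ∈ Sd k, ∀ m ∈ Sc k, m ≤ t → t - m ∉ Sd k := by
  rintro t ht m hmS hm hcon
  rcases hmS with ⟨g1, g2⟩ | ⟨g1, g2⟩ | ⟨a, ha⟩
  · rcases ht with ⟨h1, h2⟩ | ⟨h1, h2⟩ | ⟨h1, h2⟩ | h1 <;>
      rcases hcon with ⟨c1, c2⟩ | ⟨c1, c2⟩ | ⟨c1, c2⟩ | c1 <;> omega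
  · rcases ht with ⟨h1, h2⟩ | ⟨h1, h2⟩ | ⟨h1, h2⟩ | h1 <;>
      rcases hcon with ⟨c1, c2⟩ | ⟨c1, c2⟩ | ⟨c1, c2⟩ | c1 <;> omega
  · rcases ht with ⟨h1, h2⟩ | ⟨h1, h2⟩ | ⟨h1, h2⟩ | h1
    · omega
    · omega
    · have ha0 : a = 0 := by
        by_contra h
        have h3 : 2*k*1 ≤ 2*k*a := Nat.mul_le_mul_left (2*k) (by omega)
        omega
      subst ha0
      have e0 : 2*k*0 = 0 := by ring
      rcases hcon with ⟨c1, c2⟩ | ⟨c1, c2⟩ | ⟨c1, c2⟩ | c1 <;> omega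
    · have ha1 : a ≤ 1 := by
        by_contra h
        have h3 : 2*k*2 ≤ 2*k*a := Nat.mul_le_mul_left (2*k) (by omega)
        omega
      interval_cases a
      · have e0 : 2*k*0 = 0 := by ring
        rcases hcon with ⟨c1, c2⟩ | ⟨c1, c2⟩ | ⟨c1, c2⟩ | c1 <;> omega
      · have e0 : 2*k*1 = 2*k := by ring
        rcases hcon with ⟨c1, c2⟩ | ⟨c1, c2⟩ | ⟨c1, c2⟩ | c1 <;> omega

lemma K2_4 (hk : 2 ≤ k) : ∀ y, k ≤ y → y ∉ Sd k →
    ∃ m ∈ Sc k, m ≤ y ∧ y - m ∈ Sd k := by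
  intro y hy hyn
  rcases Nat.lt_or_ge y (2*k) with h | h
  · exact absurd (Or.inl ⟨hy, h⟩) hyn
  rcases Nat.lt_or_ge y (3*k) with h2 | h2
  · exact ⟨k, Or.inl ⟨le_refl k, by omega⟩, by omega, Or.inl ⟨by omega, by omega⟩⟩
  rcases Nat.lt_or_ge y (4*k-1) with h3 | h3
  · exact ⟨y - (2*k-1), Or.inl ⟨by omega, by omega⟩, by omega, Or.inl ⟨by omega, by omega⟩⟩
  rcases Nat.lt_or_ge y (5*k-1) with h4 | h4
  · exact absurd (Or.inr (Or.inl ⟨by omega, by omega⟩)) hyn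
  rcases Nat.lt_or_ge y (6*k-1) with h5 | h5
  · exact ⟨y - (4*k-1), Or.inl ⟨by omega, by omega⟩, by omega,
      Or.inr (Or.inl ⟨by omega, by omega⟩)⟩
  rcases Nat.lt_or_ge y (7*k-2) with h6 | h6
  · exact ⟨y - (5*k-2), Or.inl ⟨by omega, by omega⟩, by omega,
      Or.inr (Or.inl ⟨by omega, by omega⟩)⟩
  rcases Nat.lt_or_ge y (8*k-2) with h7 | h7
  · exact absurd (Or.inr (Or.inr (Or.inl ⟨by omega, by omega⟩))) hyn
  rcases Nat.lt_or_ge y (9*k-2) with h8 | h8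
  · exact ⟨y - (7*k-2), Or.inl ⟨by omega, by omega⟩, by omega,
      Or.inr (Or.inr (Or.inl ⟨by omega, by omega⟩))⟩
  rcases Nat.lt_or_ge y (10*k-3) with h9 | h9
  · exact ⟨y - (8*k-3), Or.inl ⟨by omega, by omega⟩, by omega,
      Or.inr (Or.inr (Or.inl ⟨by omega, by omega⟩))⟩
  rcases Nat.lt_or_ge y (10*k-2) with h10 | h10
  · exact absurd (Or.inr (Or.inr (Or.inr (by omega)))) hyn
  obtain ⟨a, u, hu, he⟩ := decomp (2*k) (y - (8*k-2)) (by omega)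
  have ha : 1 ≤ a := by
    by_contra ha; push_neg at ha
    interval_cases a
    · have e0 : 2*k*0 = 0 := by ring
      omega
  obtain ⟨a1, rfl⟩ : ∃ a1, a = a1 + 1 := ⟨a - 1, by omega⟩
  have e1 : 2*k*(a1+1) = 2*k*a1 + 2*k := by ring
  rcases Nat.lt_or_ge u k with huk | huk
  · exact ⟨2*k*(a1+1) + 7*k - 2, Or.inr (Or.inr ⟨a1+1, by omega⟩), by omega,
      Or.inl ⟨by omega, by omega⟩⟩
  rcases Nat.lt_or_ge u (2*k-1) with hu2 | hu2
  · exact ⟨2*k*a1 + 7*k - 2, Or.inr (Or.inr ⟨a1, by omega⟩), by omega,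
      Or.inr (Or.inl ⟨by omega, by omega⟩)⟩
  · rcases Nat.lt_or_ge a1 1 with ha1 | ha1
    · interval_cases a1
      · have e0 : 2*k*0 = 0 := by ring
        exact ⟨5*k-2, Or.inr (Or.inl ⟨by omega, by omega⟩), by omega,
          Or.inr (Or.inr (Or.inl ⟨by omega, by omega⟩))⟩
    · obtain ⟨a2, rfl⟩ : ∃ a2, a1 = a2 + 1 := ⟨a1 - 1, by omega⟩
      have e2 : 2*k*(a2+1) = 2*k*a2 + 2*k := by ring
      have e3 : 2*k*(a2+2) = 2*k*a2 + 4*k := by ring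
      exact ⟨2*k*a2 + 7*k - 2, Or.inr (Or.inr ⟨a2, by omega⟩), by omega,
        Or.inr (Or.inr (Or.inl ⟨by omega, by omega⟩))⟩

-- PAIR 5 : moves Sd, kernel Se
lemma resid3 (hk : 1 ≤ k) {x : ℕ} (a a' r r' : ℕ) (hr : r < 3*k-1) (hr' : r' < 3*k-1)
    (h : x + a = 3*k*a + r) (h' : x + a' = 3*k*a' + r') : a = a' ∧ r = r' := by
  have h1 : a = a' := by
    rcases Nat.lt_trichotomy a a' with h2 | h2 | h2
    · exfalso
      obtain ⟨d, rfl⟩ : ∃ d, a' = a + (d+1) := ⟨a' - a - 1, by omega⟩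
      have e1 : 3*k*(a + (d+1)) = 3*k*a + 3*k*d + 3*k := by ring
      have e2 : 1*d ≤ (3*k)*d := Nat.mul_le_mul_right d (by omega)
      omega
    · exact h2
    · exfalso
      obtain ⟨d, rfl⟩ : ∃ d, a = a' + (d+1) := ⟨a - a' - 1, by omega⟩
      have e1 : 3*k*(a' + (d+1)) = 3*k*a' + 3*k*d + 3*k := by ring
      have e2 : 1*d ≤ (3*k)*d := Nat.mul_le_mul_right d (by omega)
      omega
  subst h1; exact ⟨rfl, by omega⟩

lemma sd_subset_se (hk : 2 ≤ k) : Sd k ⊆ Se k := by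
  rintro x (⟨h1, h2⟩ | ⟨h1, h2⟩ | ⟨h1, h2⟩ | h1)
  · exact ⟨0, x - k, by omega, by have e : 3*k*0 = 0 := (by ring); omega⟩
  · exact ⟨1, x + 1 - 4*k, by omega, by have e : 3*k*1 = 3*k := (by ring); omega⟩
  · exact ⟨2, x + 2 - 7*k, by omega, by have e : 3*k*2 = 6*k := (by ring); omega⟩
  · exact ⟨3, 0, by omega, by have e : 3*k*3 = 9*k := (by ring); omega⟩

lemma se_indep (hk : 1 ≤ k) : ∀ t ∈ Se k, ∀ m ∈ Se k, m ≤ t → t - m ∉ Se k := by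
  rintro t ⟨i, c, hc, hi⟩ m ⟨e, b, hb, he⟩ hm ⟨f, d, hd, hf⟩
  have e1 : 3*k*(e+f) = 3*k*e + 3*k*f := by ring
  rcases Nat.lt_or_ge (2*k + b + d) (3*k-1) with hcase | hcase
  · have h : t + (e+f) = 3*k*(e+f) + (2*k + b + d) := by omega
    have := resid3 hk i (e+f) (k+c) (2*k+b+d) (by omega) (by omega) hi h
    omega
  · have e2 : 3*k*(e+f+1) = 3*k*e + 3*k*f + 3*k := by ring
    have h : t + (e+f+1) = 3*k*(e+f+1) + (b + d + 1 - k) := by omega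
    have := resid3 hk i (e+f+1) (k+c) (b+d+1-k) (by omega) (by omega) hi h
    omega

lemma K1_5 (hk : 2 ≤ k) : ∀ t ∈ Se k, ∀ m ∈ Sd k, m ≤ t → t - m ∉ Se k :=
  fun t ht m hm => se_indep (by omega) t ht m (sd_subset_se hk hm)

lemma K2_5 (hk : 2 ≤ k) : ∀ y, k ≤ y → y ∉ Se k →
    ∃ m ∈ Sd k, m ≤ y ∧ y - m ∈ Se k := by
  intro y hy hyn
  obtain ⟨q, s, hs, he⟩ := decomp (3*k-1) y (by omega)
  have e1 : (3*k-1+1)*q = (3*k-1)*q + q := by ring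
  have e0 : 3*k-1+1 = 3*k := by omega
  rw [e0] at e1
  rcases Nat.lt_or_ge s k with hsk | hsk
  · have hq : 1 ≤ q := by
      by_contra hq; push_neg at hq
      interval_cases q
      · have z1 : (3*k-1)*0 = 0 := by ring
        omega
    obtain ⟨q', rfl⟩ : ∃ q', q = q' + 1 := ⟨q - 1, by omega⟩
    have e2 : 3*k*(q'+1) = 3*k*q' + 3*k := by ring
    have e3 : (3*k-1)*(q'+1) = (3*k-1)*q' + (3*k-1) := by ring
    refine ⟨k + s, Or.inl ⟨by omega, by omega⟩, by omega, ⟨q', k-1, by omega, ?_⟩⟩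
    omega
  rcases Nat.lt_or_ge s (2*k) with hs2 | hs2
  · exact absurd ⟨q, s - k, by omega, by omega⟩ hyn
  · refine ⟨s - k, Or.inl ⟨by omega, by omega⟩, by omega, ⟨q, 0, by omega, ?_⟩⟩
    omega

lemma mk_eq_se (hk : 2 ≤ k) : Mk k = Se k := by
  ext n
  constructor
  · rintro ⟨h1, i, j, hj1, hj2, rfl⟩
    refine ⟨i, j - k, by omega, ?_⟩
    have e1 : (3*k-1+1)*i = (3*k-1)*i + i := by ring
    have e0 : 3*k-1+1 = 3*k := by omega
    rw [e0] at e1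
    have e2 : i*(3*k-1) = (3*k-1)*i := by ring
    omega
  · rintro ⟨a, b, hb, hab⟩
    refine ⟨by omega, a, k + b, by omega, by omega, ?_⟩
    have e1 : (3*k-1+1)*a = (3*k-1)*a + a := by ring
    have e0 : 3*k-1+1 = 3*k := by omega
    rw [e0] at e1
    have e2 : a*(3*k-1) = (3*k-1)*a := by ring
    omega

end PhiFive

open PhiFive in
theorem varphi_single_eq_five (k : ℕ) (hk : 2 ≤ k) :
    Pset^[5] ({k} : Set ℕ) = Mk k ∧ Pset^[4] ({k} : Set ℕ) ≠ Mk k := by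
  have hk1 : (1:ℕ) ≤ k := by omega
  have hmemk : ∀ m ∈ ({k} : Set ℕ), k ≤ m := by
    intro m hm; rw [Set.mem_singleton_iff] at hm; omega
  have h1 : Pset ({k} : Set ℕ) = Sa k :=
    master k hk1 _ _ rfl hmemk (sa_ge hk1) (K1_1 hk1) (K2_1 hk1)
  have h2 : Pset (Sa k) = Sb k :=
    master k hk1 _ _ (k_mem_sa hk1) (sa_ge hk1) (sb_ge hk1) (K1_2 hk1) (K2_2 hk1)
  have h3 : Pset (Sb k) = Sc k :=
    master k hk1 _ _ (k_mem_sb hk1) (sb_ge hk1) (sc_ge hk1) (K1_3 hk) (K2_3 hk)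
  have h4 : Pset (Sc k) = Sd k :=
    master k hk1 _ _ (k_mem_sc hk1) (sc_ge hk1) (sd_ge hk1) (K1_4 hk) (K2_4 hk)
  have h5 : Pset (Sd k) = Se k :=
    master k hk1 _ _ (k_mem_sd hk1) (sd_ge hk1) (se_ge hk1) (K1_5 hk) (K2_5 hk)
  have e4 : Pset^[4] ({k} : Set ℕ) = Sd k := by
    show Pset (Pset (Pset (Pset ({k} : Set ℕ)))) = Sd k
    rw [h1, h2, h3, h4]
  have e5 : Pset^[5] ({k} : Set ℕ) = Se k := by
    show Pset (Pset (Pset (Pset (Pset ({k} : Set ℕ))))) = Se k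
    rw [h1, h2, h3, h4, h5]
  refine ⟨by rw [e5, mk_eq_se hk], ?_⟩
  rw [e4, mk_eq_se hk]
  intro hcon
  have h10 : (10*k - 2) ∈ Se k :=
    ⟨3, 1, by omega, by have e : 3*k*3 = 9*k := (by ring); omega⟩
  rw [← hcon] at h10
  rcases h10 with ⟨u1, u2⟩ | ⟨u1, u2⟩ | ⟨u1, u2⟩ | u1 <;> omega
end
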